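/- arXiv:1703.00416 — 2 statements merged into one kernel-verified Lean document; each statement's English description precedes it below -/
import Mathlib

section
/- The sequence c_d = 3^{1−2/(2d+1)} · (2d−1)^{1−2/(2d+1)} · (2d+1) · Γ(d−1/2)^{2−2/(2d+1)} / ( 2^{4−2/(2d+1)} · (d!)^{2−4/(2d+1)} ), indexed by integers d ≥ 1, converges to 3/(4e) as d → ∞. -/
/-
With ε = 2/(2d+1), pulling powers of d through the expression splits c_d into
  3^(1-ε) · ((2d-1)/d)^(1-ε) · ((2d+1)/d) · (d^(3/2) Γ(d-1/2)/d!)^(2-ε)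
    · ((d!)² d)^(ε/2)/d / 2^(4-ε).
The fourth factor tends to 1 by Wendel's limit Γ(x+a)/(Γ(x) x^a) → 1, which follows from
the log-convexity of Γ; the fifth tends to 1/e by Stirling's formula.
Hence c_d → 3·2·2·e⁻¹/16 = 3/(4e).
-/

open Filter Topology Real
open scoped Nat

namespace Real

theorem Gamma_add_le_Gamma_mul_rpow {x a : ℝ} (hx : 0 < x) (ha₀ : 0 < a) (ha₁ : a < 1) :
    Gamma (x + a) ≤ Gamma x * x ^ a := by
  have hΓ := Gamma_pos_of_pos hx
  have h := Gamma_mul_add_mul_le_rpow_Gamma_mul_rpow_Gamma hx (by linarith : 0 < x + 1)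
    (sub_pos.2 ha₁) ha₀ (sub_add_cancel 1 a)
  rwa [show (1 - a) * x + a * (x + 1) = x + a by ring, Gamma_add_one hx.ne',
    mul_rpow hx.le hΓ.le, mul_left_comm, ← rpow_add hΓ, sub_add_cancel, rpow_one, mul_comm] at h

theorem mul_Gamma_le_Gamma_add_mul_rpow {x a : ℝ} (hx : 0 < x) (ha₀ : 0 < a) (ha₁ : a < 1) :
    x * Gamma x ≤ Gamma (x + a) * (x + a) ^ (1 - a) := by
  have hxa : 0 < x + a := by linarith
  have hΓ := Gamma_pos_of_pos hxa
  have h := Gamma_mul_add_mul_le_rpow_Gamma_mul_rpow_Gamma hxa (by linarith : 0 < x + a + 1)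
    ha₀ (sub_pos.2 ha₁) (add_sub_cancel a 1)
  rwa [show a * (x + a) + (1 - a) * (x + a + 1) = x + 1 by ring, Gamma_add_one hx.ne',
    Gamma_add_one hxa.ne', mul_rpow hxa.le hΓ.le, mul_left_comm, ← rpow_add hΓ,
    add_sub_cancel, rpow_one, mul_comm (_ ^ _)] at h

theorem tendsto_Gamma_add_div_Gamma_mul_rpow {a : ℝ} (ha₀ : 0 < a) (ha₁ : a < 1) :
    Tendsto (fun x => Gamma (x + a) / (Gamma x * x ^ a)) atTop (𝓝 1) := by
  have hlower : Tendsto (fun x : ℝ => (x / (x + a)) ^ (1 - a)) atTop (𝓝 1) := by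
    have h : Tendsto (fun x : ℝ => (1 + a / x)⁻¹) atTop (𝓝 1) := by
      simpa using ((tendsto_const_nhds.div_atTop tendsto_id).const_add (1 : ℝ)).inv₀
        (by simp : (1 : ℝ) + 0 ≠ 0)
    have h' : Tendsto (fun x : ℝ => x / (x + a)) atTop (𝓝 1) := by
      refine h.congr' ?_
      filter_upwards [eventually_gt_atTop 0] with x hx
      field_simp
    simpa using h'.rpow_const (Or.inl one_ne_zero)
  refine tendsto_of_tendsto_of_tendsto_of_le_of_le' hlower tendsto_const_nhds ?_ ?_
  all_goals filter_upwards [eventually_gt_atTop 0] with x hx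
  · have hxa : 0 < x + a := by linarith
    have hΓ := Gamma_pos_of_pos hx
    rw [div_rpow hx.le hxa.le, div_le_div_iff₀ (by positivity) (by positivity), mul_left_comm,
      ← rpow_add hx, sub_add_cancel, rpow_one, mul_comm]
    exact mul_Gamma_le_Gamma_add_mul_rpow hx ha₀ ha₁
  · have hpos : 0 < Gamma x * x ^ a := by have := Gamma_pos_of_pos hx; positivity
    rw [div_le_one hpos]
    exact Gamma_add_le_Gamma_mul_rpow hx ha₀ ha₁

theorem tendsto_rpow_mul_Gamma_sub_half_div_factorial :
    Tendsto (fun n : ℕ => (n : ℝ) ^ (3 / 2 : ℝ) * Gamma (n - 1 / 2) / n !) atTop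
      (𝓝 1) := by
  have h := ((tendsto_Gamma_add_div_Gamma_mul_rpow (a := 1 / 2) (by norm_num) (by norm_num)).comp
    tendsto_natCast_atTop_atTop).mul (tendsto_natCast_div_add_atTop (-1 / 2 : ℝ))
  rw [one_mul] at h
  refine h.congr' ?_
  filter_upwards [eventually_ge_atTop 1] with n hn
  have hn' : (1 : ℝ) ≤ n := by exact_mod_cast hn
  have hΓ := Gamma_pos_of_pos (by linarith : (0 : ℝ) < n)
  have hhalf : Gamma (n + 1 / 2) = (n - 1 / 2) * Gamma (n - 1 / 2) := by
    rw [← Gamma_add_one (by linarith)]; ring_nf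
  have hfact : (n ! : ℝ) = n * Gamma n := by
    rw [← Gamma_nat_eq_factorial, Gamma_add_one (by positivity)]
  have hpow : (n : ℝ) ^ (3 / 2 : ℝ) = n * n ^ (1 / 2 : ℝ) := by
    rw [← rpow_one_add' (by positivity) (by norm_num)]; norm_num
  simp only [Function.comp_apply]
  rw [hhalf, hfact, hpow]
  have hsqrt : ((n : ℝ) ^ (1 / 2 : ℝ)) ^ 2 = n := by
    rw [← rpow_natCast, ← rpow_mul (by positivity)]; norm_num
  rw [div_mul_div_comm, div_eq_div_iff (mul_pos (by positivity) (by linarith)).ne' (by positivity)]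
  linear_combination (1 / 2 - (n : ℝ)) * n * Gamma (n - 1 / 2) * Gamma n * hsqrt

theorem tendsto_rpow_factorial_sq_mul_div :
    Tendsto (fun n : ℕ => ((n ! : ℝ) ^ 2 * n) ^ (1 / (2 * (n : ℝ) + 1)) / n) atTop
      (𝓝 (exp (-1))) := by
  have hden : Tendsto (fun n : ℕ => 2 * (n : ℝ) + 1) atTop atTop :=
    tendsto_atTop_add_const_right _ 1 (tendsto_natCast_atTop_atTop.const_mul_atTop two_pos)
  have hstirling : Tendsto (fun n : ℕ => 2 * log (Stirling.stirlingSeq n) + log 2 + 1) atTop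
      (𝓝 (2 * log √π + log 2 + 1)) :=
    (((continuousAt_log (by positivity)).tendsto.comp
      Stirling.tendsto_stirlingSeq_sqrt_pi).const_mul 2).add_const _ |>.add_const _
  have hlog : Tendsto (fun n : ℕ => log n / (2 * (n : ℝ) + 1)) atTop (𝓝 0) := by
    simpa [Function.comp_def] using (tendsto_pow_log_div_mul_add_atTop 2 1 1 two_ne_zero).comp
      tendsto_natCast_atTop_atTop
  -- With log n! = n log (n/e) + ½ log 2n + log s_n (Stirling), the logarithm of the n-th term
  -- is (2 log s_n + log 2 + 1 + log n)/(2n+1) - 1.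
  have h := (((hstirling.div_atTop hden).add hlog).sub_const 1).rexp
  rw [zero_add, zero_sub] at h
  refine h.congr' ?_
  filter_upwards [eventually_ge_atTop 1] with n hn
  have hn' : (0 : ℝ) < n := by exact_mod_cast hn
  have hF : 0 < ((n ! : ℝ) ^ 2 * n) ^ (1 / (2 * (n : ℝ) + 1)) / n := by positivity
  rw [← exp_log hF, log_div (by positivity) hn'.ne', log_rpow (by positivity),
    log_mul (by positivity) hn'.ne', log_pow, Stirling.log_stirlingSeq_formula,
    log_div hn'.ne' (exp_pos 1).ne', log_exp, log_mul two_ne_zero hn'.ne']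
  congr 1
  field_simp
  ring

theorem rpow_product_factorization {t x y g f ε : ℝ} (ht : 0 < t) (hx : 0 < x) (hy : 0 < y)
    (hg : 0 < g) (hf : 0 < f) :
    x ^ (1 - ε) * y * g ^ (2 - ε) / f ^ (2 - 2 * ε) =
      (x / t) ^ (1 - ε) * (y / t) * (t ^ (3 / 2 : ℝ) * g / f) ^ (2 - ε) *
        ((f ^ 2 * t) ^ (ε / 2) / t) := by
  apply log_injOn_pos (Set.mem_Ioi.2 (by positivity)) (Set.mem_Ioi.2 (by positivity))
  simp (disch := positivity) only [log_mul, log_div, log_rpow, log_pow]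
  ring

end Real

theorem stmt1 :
    Tendsto (fun d : ℕ =>
        (3 : ℝ) ^ (1 - 2 / (2 * (d : ℝ) + 1)) * (2 * (d : ℝ) - 1) ^ (1 - 2 / (2 * (d : ℝ) + 1)) *
            (2 * (d : ℝ) + 1) * Real.Gamma ((d : ℝ) - 1/2) ^ (2 - 2 / (2 * (d : ℝ) + 1)) /
          ((2 : ℝ) ^ (4 - 2 / (2 * (d : ℝ) + 1)) *
            (d.factorial : ℝ) ^ (2 - 4 / (2 * (d : ℝ) + 1))))
      atTop (nhds (3 / (4 * Real.exp 1))) := by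
  have hε : Tendsto (fun d : ℕ => 2 / (2 * (d : ℝ) + 1)) atTop (𝓝 0) :=
    tendsto_const_nhds.div_atTop <| tendsto_atTop_add_const_right _ 1
      (tendsto_natCast_atTop_atTop.const_mul_atTop two_pos)
  have hA : Tendsto (fun d : ℕ => (2 * (d : ℝ) - 1) / d) atTop (𝓝 2) := by
    simpa [sub_eq_add_neg, add_comm] using
      tendsto_add_mul_div_add_mul_atTop_nhds (-1) 0 (2 : ℝ) one_ne_zero
  have hB : Tendsto (fun d : ℕ => (2 * (d : ℝ) + 1) / d) atTop (𝓝 2) := by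
    simpa [add_comm] using tendsto_add_mul_div_add_mul_atTop_nhds 1 0 (2 : ℝ) one_ne_zero
  have hexponent (a : ℝ) :
      Tendsto (fun d : ℕ => a - 2 / (2 * (d : ℝ) + 1)) atTop (𝓝 a) := by
    simpa using tendsto_const_nhds.sub hε
  have h := ((((((tendsto_const_nhds (x := (3 : ℝ))).rpow (hexponent 1) (by norm_num)).mul
    (hA.rpow (hexponent 1) (by norm_num))).mul hB).mul
    (tendsto_rpow_mul_Gamma_sub_half_div_factorial.rpow (hexponent 2) (by norm_num))).mul
    tendsto_rpow_factorial_sq_mul_div).div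
    ((tendsto_const_nhds (x := (2 : ℝ))).rpow (hexponent 4) (by norm_num)) (by norm_num)
  convert h.congr' ?_ using 2
  · simp only [rpow_one, one_rpow, exp_neg]
    norm_num
    ring
  · filter_upwards [eventually_ge_atTop 1] with d hd
    have hd' : (1 : ℝ) ≤ d := by exact_mod_cast hd
    have hfactor := rpow_product_factorization (ε := 2 / (2 * (d : ℝ) + 1))
      (by positivity : (0 : ℝ) < d) (by linarith : (0 : ℝ) < 2 * d - 1)
      (by positivity : (0 : ℝ) < 2 * d + 1) (Gamma_pos_of_pos (by linarith : (0 : ℝ) < d - 1 / 2))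
      (by positivity : (0 : ℝ) < d.factorial)
    rw [show 2 / (2 * (d : ℝ) + 1) / 2 = 1 / (2 * d + 1) by ring,
      show 2 - 2 * (2 / (2 * (d : ℝ) + 1)) = 2 - 4 / (2 * d + 1) by ring] at hfactor
    simp only [Pi.div_apply]
    linear_combination
      (-(3 : ℝ) ^ (1 - 2 / (2 * (d : ℝ) + 1)) / 2 ^ (4 - 2 / (2 * (d : ℝ) + 1))) * hfactor
end

section
/- Let d ≥ 0 be an integer and let x, y be unit vectors in ℂ^{d+1} with |⟨x,y⟩| < 1. Then (1/(4π²)) · ∫₀^{2π} ∫₀^{2π} ‖e^{iθ₁}·x − e^{iθ₂}·y‖^{−2} dθ₁ dθ₂ = 1 / ( 2·√(1 − |⟨x,y⟩|²) ). -/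
/-!
For unit vectors, `‖e^{iθ₁} x - e^{iθ₂} y‖² = 2 (1 - Re (w e^{iθ₂}))` with
`w = e^{-iθ₁} ⟪x, y⟫`, and `Re (w e^{iθ₂}) = |w| cos (θ₂ + arg w)`. So after a shift of the
variable the inner integral is the classical `∫₀^{2π} dθ / (a - b cos θ) = 2π / √(a² - b²)`
with `a = 1`, `b = |⟪x, y⟫|`; it does not depend on `θ₁`.
-/

open Real intervalIntegral

section CosineIntegral

variable {a b : ℝ}

lemma sub_mul_cos_pos (hb : |b| < a) (θ : ℝ) : 0 < a - b * cos θ := by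
  have : b * cos θ ≤ |b| := by
    calc b * cos θ ≤ |b * cos θ| := le_abs_self _
      _ = |b| * |cos θ| := abs_mul _ _
      _ ≤ |b| := mul_le_of_le_one_right (abs_nonneg b) (abs_cos_le_one θ)
  linarith

/-- A form of the half-angle antiderivative `(2/k) arctan (√((a+b)/(a-b)) tan (θ/2))`,
`k = √(a² - b²)`, that is continuous on all of `ℝ`. -/
lemma hasDerivAt_antideriv_inv_sub_mul_cos (hb : |b| < a) (θ : ℝ) :
    HasDerivAt
      (fun θ => (θ + 2 * arctan (b * sin θ / (a + √(a ^ 2 - b ^ 2) - b * cos θ))) /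
        √(a ^ 2 - b ^ 2))
      (a - b * cos θ)⁻¹ θ := by
  set k := √(a ^ 2 - b ^ 2)
  have hab : 0 < a ^ 2 - b ^ 2 := sub_pos.2 (sq_lt_sq' (neg_lt_of_abs_lt hb) (lt_of_abs_lt hb))
  have hk2 : k ^ 2 = a ^ 2 - b ^ 2 := sq_sqrt hab.le
  have hk : 0 < k := sqrt_pos.2 hab
  have hpos := sub_mul_cos_pos hb θ
  have hden : a + k - b * cos θ ≠ 0 := by linarith
  have hnum : HasDerivAt (fun θ => b * sin θ) (b * cos θ) θ := (hasDerivAt_sin θ).const_mul b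
  have hden' : HasDerivAt (fun θ => a + k - b * cos θ) (b * sin θ) θ := by
    simpa using ((hasDerivAt_cos θ).const_mul b).const_sub (a + k)
  refine (((hasDerivAt_id' θ).add ((hnum.div hden' hden).arctan.const_mul 2)).div_const k
    ).congr_deriv ?_
  have hs := sin_sq_add_cos_sq θ
  have hak : a + k ≠ 0 := by linarith [(abs_nonneg b).trans_lt hb]
  simp only [Pi.div_apply]
  field_simp
  linear_combination (-(a + k - b * cos θ)) * (b ^ 2 * hs + hk2)

theorem integral_inv_sub_mul_cos (hb : |b| < a) :
    ∫ θ in (0 : ℝ)..2 * π, (a - b * cos θ)⁻¹ = 2 * π / √(a ^ 2 - b ^ 2) := by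
  have hint : IntervalIntegrable (fun θ => (a - b * cos θ)⁻¹) MeasureTheory.volume 0 (2 * π) :=
    (by fun_prop : Continuous fun θ => a - b * cos θ).inv₀ (fun θ => (sub_mul_cos_pos hb θ).ne')
      |>.intervalIntegrable _ _
  rw [integral_eq_sub_of_hasDerivAt (fun θ _ => hasDerivAt_antideriv_inv_sub_mul_cos hb θ) hint]
  simp

end CosineIntegral

lemma Complex.re_mul_exp_ofReal_mul_I (w : ℂ) (θ : ℝ) :
    (w * Complex.exp (θ * Complex.I)).re = ‖w‖ * Real.cos (θ + w.arg) := by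
  conv_lhs => rw [← Complex.norm_mul_exp_arg_mul_I w]
  rw [mul_assoc, ← Complex.exp_add, ← add_mul, ← Complex.ofReal_add, add_comm,
    Complex.re_ofReal_mul, Complex.exp_ofReal_mul_I_re]

theorem integral_inv_one_sub_re_mul_exp {w : ℂ} (hw : ‖w‖ < 1) :
    ∫ θ in (0 : ℝ)..2 * π, (1 - (w * Complex.exp (θ * Complex.I)).re)⁻¹
      = 2 * π / √(1 - ‖w‖ ^ 2) := by
  have hper : Function.Periodic (fun θ => (1 - ‖w‖ * cos θ)⁻¹) (2 * π) := fun θ => by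
    simp only [cos_add_two_pi]
  simp only [Complex.re_mul_exp_ofReal_mul_I]
  rw [integral_comp_add_right (fun θ => (1 - ‖w‖ * cos θ)⁻¹), zero_add, add_comm,
    hper.intervalIntegral_add_eq, zero_add]
  simpa using integral_inv_sub_mul_cos (a := 1) (b := ‖w‖) (by rwa [abs_norm])

open scoped InnerProductSpace ComplexConjugate

lemma norm_smul_sub_smul_sq {𝕜 E : Type*} [RCLike 𝕜] [NormedAddCommGroup E]
    [InnerProductSpace 𝕜 E]
    (a b : 𝕜) (x y : E) :
    ‖a • x - b • y‖ ^ 2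
      = ‖a‖ ^ 2 * ‖x‖ ^ 2 + ‖b‖ ^ 2 * ‖y‖ ^ 2 - 2 * RCLike.re (conj a * ⟪x, y⟫_𝕜 * b) := by
  rw [norm_sub_sq (𝕜 := 𝕜), norm_smul, norm_smul, inner_smul_left, inner_smul_right,
    ← mul_assoc, mul_right_comm _ b]
  ring

theorem stmt9 (d : ℕ) (x y : EuclideanSpace ℂ (Fin (d + 1)))
    (hx : ‖x‖ = 1) (hy : ‖y‖ = 1) (hxy : ‖⟪x, y⟫_ℂ‖ < 1) :
    (1 / (4 * Real.pi ^ 2)) *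
        ∫ θ₁ in (0 : ℝ)..(2 * Real.pi), ∫ θ₂ in (0 : ℝ)..(2 * Real.pi),
          1 / ‖Complex.exp (θ₁ * Complex.I) • x - Complex.exp (θ₂ * Complex.I) • y‖ ^ 2
      = 1 / (2 * Real.sqrt (1 - ‖⟪x, y⟫_ℂ‖ ^ 2)) := by
  have inner_integral (θ₁ : ℝ) :
      ∫ θ₂ in (0 : ℝ)..2 * π,
          1 / ‖Complex.exp (θ₁ * Complex.I) • x - Complex.exp (θ₂ * Complex.I) • y‖ ^ 2
        = π / √(1 - ‖⟪x, y⟫_ℂ‖ ^ 2) := by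
    have hw : ‖conj (Complex.exp (θ₁ * Complex.I)) * ⟪x, y⟫_ℂ‖ = ‖⟪x, y⟫_ℂ‖ := by
      simp [Complex.norm_exp_ofReal_mul_I]
    calc _ = ∫ θ₂ in (0 : ℝ)..2 * π, 2⁻¹ * (1 -
            (conj (Complex.exp (θ₁ * Complex.I)) * ⟪x, y⟫_ℂ * Complex.exp (θ₂ * Complex.I)).re)⁻¹ := by
          refine integral_congr fun θ₂ _ => ?_
          rw [norm_smul_sub_smul_sq, RCLike.re_to_complex, Complex.norm_exp_ofReal_mul_I,
            Complex.norm_exp_ofReal_mul_I, hx, hy, one_div, ← mul_inv]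
          ring
      _ = π / √(1 - ‖⟪x, y⟫_ℂ‖ ^ 2) := by
          rw [integral_const_mul, integral_inv_one_sub_re_mul_exp (hw ▸ hxy), hw]
          ring
  rw [integral_congr fun θ₁ _ => inner_integral θ₁, integral_const, sub_zero, smul_eq_mul]
  have : 0 < √(1 - ‖⟪x, y⟫_ℂ‖ ^ 2) := sqrt_pos.2 (by nlinarith [norm_nonneg ⟪x, y⟫_ℂ])
  field_simp
  ring
end
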